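/- In the optimal WSD-bearing-risk contract, the marginal payment satisfies dP*/dK* = s·(1 − G(K*(ξ)−ξ)) − w, which is positive when G(K*(ξ)−ξ) < (s−w)/s and negative when G(K*(ξ)−ξ) > (s−w)/s; hence P* is non-monotone in K* (first increasing then decreasing) whenever G(K*(ξ)−ξ) crosses (s−w)/s. -/

import Mathlib

open MeasureTheory Set Filter Topology

/-!
Since `K*(ξ) ≥ ξ`, the payment is `-Π(ξ) + r ξ + s ∫₀^{K*(ξ)-ξ} (1 - G) - w K*(ξ)`.
In its derivative, `-Π' + r = s (1 - G(K*(ξ)-ξ))` cancels against the contribution of the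
`-ξ` in the upper limit of the integral, leaving `(s (1 - G(K*(ξ)-ξ)) - w) K*'(ξ)`, whose
sign is that of `s (1 - G) - w` because `K*' > 0`. A negative derivative at a point of an
interval having another point of the interval to its left rules out monotonicity.
-/

theorem hasDerivAt_integral_comp {f h : ℝ → ℝ} {h' x : ℝ} (hf : Continuous f) (a : ℝ)
    (hh : HasDerivAt h h' x) :
    HasDerivAt (fun y => ∫ u in a..h y, f u) (f (h x) * h') x :=
  (hf.integral_hasStrictDerivAt a (h x)).hasDerivAt.comp x hh

theorem accPt_of_Ioo_subset {a x : ℝ} {s : Set ℝ} (hax : a < x) (hs : Ioo a x ⊆ s) :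
    AccPt x (𝓟 s) := by
  rw [accPt_principal_iff_nhdsWithin]
  have : (𝓝[Ioo a x] x).NeBot := by
    rw [nhdsWithin_Ioo_eq_nhdsLT hax]
    infer_instance
  exact this.mono (nhdsWithin_mono _ fun y hy => ⟨hs hy, hy.2.ne⟩)

theorem not_monotoneOn_of_hasDerivAt_neg {f : ℝ → ℝ} {f' a b : ℝ} {s : Set ℝ}
    (hs : s.OrdConnected) (ha : a ∈ s) (hb : b ∈ s) (hab : a < b) (hf : HasDerivAt f f' b)
    (hf' : f' < 0) : ¬ MonotoneOn f s := fun hmono =>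
  hf'.not_ge <| hf.hasDerivWithinAt.nonneg_of_monotoneOn
    (accPt_of_Ioo_subset hab (Ioo_subset_Icc_self.trans (hs.out ha hb))) hmono

theorem mul_one_sub_sub_pos_iff {s w g : ℝ} (hs : 0 < s) :
    0 < s * (1 - g) - w ↔ g < (s - w) / s := by
  rw [lt_div_iff₀ hs]
  constructor <;> intro h <;> linarith

theorem mul_one_sub_sub_neg_iff {s w g : ℝ} (hs : 0 < s) :
    s * (1 - g) - w < 0 ↔ (s - w) / s < g := by
  rw [div_lt_iff₀ hs]
  constructor <;> intro h <;> linarith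

theorem hasDerivAt_payment {r s w ξ k'ξ : ℝ} {G k Pi : ℝ → ℝ} (hG : Continuous G)
    (hk : HasDerivAt k k'ξ ξ) (hPi : HasDerivAt Pi ((r - s) + s * G (k ξ - ξ)) ξ) :
    HasDerivAt (fun x => -Pi x + r * x + s * (∫ u in (0:ℝ)..(k x - x), (1 - G u)) - w * k x)
      ((s * (1 - G (k ξ - ξ)) - w) * k'ξ) ξ := by
  have hint : HasDerivAt (fun x => ∫ u in (0:ℝ)..(k x - x), (1 - G u))
      ((1 - G (k ξ - ξ)) * (k'ξ - 1)) ξ :=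
    hasDerivAt_integral_comp (continuous_const.sub hG) 0 (hk.sub (hasDerivAt_id ξ))
  have H : HasDerivAt
      (fun x => -Pi x + r * x + s * (∫ u in (0:ℝ)..(k x - x), (1 - G u)) - w * k x)
      (-((r - s) + s * G (k ξ - ξ)) + r * 1 + s * ((1 - G (k ξ - ξ)) * (k'ξ - 1)) - w * k'ξ)
      ξ :=
    (((hPi.neg.add ((hasDerivAt_id ξ).const_mul r)).add (hint.const_mul s)).sub (hk.const_mul w))
  convert H using 1
  ring

theorem stmt16_general
    (r s w ξlo ξhi : ℝ) (G : ℝ → ℝ) (k k' p Pi : ℝ → ℝ)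
    (hw : 0 < w) (hws : w < s)
    (hGcont : Continuous G)
    (hkd : ∀ ξ, HasDerivAt k (k' ξ) ξ) (hk'pos : ∀ ξ, 0 < k' ξ)
    (hk : ∀ ξ, ξ ≤ k ξ)
    (hPid : ∀ ξ, HasDerivAt Pi ((r - s) + s * G (k ξ - ξ)) ξ)
    (hp : ∀ ξ, p ξ = -Pi ξ + r * min (k ξ) ξ +
      s * (∫ u in (0:ℝ)..(max (k ξ - ξ) 0), (1 - G u)) - w * k ξ) :
    (∀ ξ ∈ Icc ξlo ξhi,
      HasDerivAt p ((s * (1 - G (k ξ - ξ)) - w) * k' ξ) ξ ∧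
      (G (k ξ - ξ) < (s - w) / s → 0 < s * (1 - G (k ξ - ξ)) - w) ∧
      ((s - w) / s < G (k ξ - ξ) → s * (1 - G (k ξ - ξ)) - w < 0)) ∧
    ((∃ ξ₁ ∈ Icc ξlo ξhi, ∃ ξ₂ ∈ Icc ξlo ξhi, ξ₁ < ξ₂ ∧
        G (k ξ₁ - ξ₁) < (s - w) / s ∧ (s - w) / s < G (k ξ₂ - ξ₂)) →
      ¬ MonotoneOn p (Icc ξlo ξhi)) := by
  have hs : 0 < s := hw.trans hws
  have hp' : p = fun x => -Pi x + r * x +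
      s * (∫ u in (0:ℝ)..(k x - x), (1 - G u)) - w * k x := funext fun x => by
    rw [hp x, min_eq_right (hk x), max_eq_left (sub_nonneg.2 (hk x))]
  have hderiv : ∀ ξ, HasDerivAt p ((s * (1 - G (k ξ - ξ)) - w) * k' ξ) ξ := fun ξ =>
    hp' ▸ hasDerivAt_payment hGcont (hkd ξ) (hPid ξ)
  refine ⟨fun ξ _ =>
    ⟨hderiv ξ, (mul_one_sub_sub_pos_iff hs).2, (mul_one_sub_sub_neg_iff hs).2⟩, ?_⟩
  rintro ⟨ξ₁, hξ₁, ξ₂, hξ₂, hlt, -, hcross⟩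
  exact not_monotoneOn_of_hasDerivAt_neg ordConnected_Icc hξ₁ hξ₂ hlt (hderiv ξ₂)
    (mul_neg_of_neg_of_pos ((mul_one_sub_sub_neg_iff hs).2 hcross) (hk'pos ξ₂))

/-- Optimal WSD-bearing-risk contract: dP*/dK* = s(1 − G(K*(ξ)−ξ)) − w, which is
positive when G(K*(ξ)−ξ) < (s−w)/s and negative when G(K*(ξ)−ξ) > (s−w)/s; hence P*
is non-monotone in K* whenever G(K*(ξ)−ξ) crosses (s−w)/s. -/
theorem stmt16
    (r s w ξlo ξhi : ℝ) (G : ℝ → ℝ) (k k' p Pi : ℝ → ℝ)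
    (hw : 0 < w) (hws : w < s) (hsr : s < r) (hlohi : ξlo ≤ ξhi)
    (hGcont : Continuous G) (hGmono : Monotone G) (hG0 : G 0 = 0)
    (hG1 : ∀ t, G t ≤ 1)
    (hkd : ∀ ξ, HasDerivAt k (k' ξ) ξ) (hk'pos : ∀ ξ, 0 < k' ξ)
    (hk : ∀ ξ, ξ ≤ k ξ)
    (hPid : ∀ ξ, HasDerivAt Pi ((r - s) + s * G (k ξ - ξ)) ξ)
    (hp : ∀ ξ, p ξ = -Pi ξ + r * min (k ξ) ξ +
      s * (∫ u in (0:ℝ)..(max (k ξ - ξ) 0), (1 - G u)) - w * k ξ) :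
    (∀ ξ ∈ Icc ξlo ξhi,
      HasDerivAt p ((s * (1 - G (k ξ - ξ)) - w) * k' ξ) ξ ∧
      (G (k ξ - ξ) < (s - w) / s → 0 < s * (1 - G (k ξ - ξ)) - w) ∧
      ((s - w) / s < G (k ξ - ξ) → s * (1 - G (k ξ - ξ)) - w < 0)) ∧
    ((∃ ξ₁ ∈ Icc ξlo ξhi, ∃ ξ₂ ∈ Icc ξlo ξhi, ξ₁ < ξ₂ ∧
        G (k ξ₁ - ξ₁) < (s - w) / s ∧ (s - w) / s < G (k ξ₂ - ξ₂)) →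
      ¬ MonotoneOn p (Icc ξlo ξhi)) :=
  stmt16_general r s w ξlo ξhi G k k' p Pi hw hws hGcont hkd hk'pos hk hPid hp
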